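/- With the notation in the context, for all strictly increasing lists of positive integers 𝐥 = (l_1,…,l_m) and 𝐪 = (q_1,…,q_n) (m, n ≥ 0, with l_m := 0 if m = 0) and every integer x ≥ 0, the following identity of rational numbers holds: P̄_{𝐥,𝐪}(x+1) · (2x+2l_m-m+n+1)! · (2x+2l_m-m+n+2)! · ∏_{i=1}^{m} (x+l_m-l_i+1) · ∏_{i=1}^{n} (x+l_m-q_i-m+n+1) = P̄_{𝐥,𝐪}(x) · (2x+2l_m+1)! · (2x+2l_m-2m+2n+2)! · ∏_{i=1}^{m} (x+l_m+l_i-m+n+1) · ∏_{i=1}^{n} (x+l_m+q_i+1). -/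

import Mathlib

open Finset

/-- The Pochhammer symbol `(a)_k = a(a+1)⋯(a+k-1)`, with `(a)_0 = 1`. -/
def pochQ (a : ℚ) (k : ℕ) : ℚ := ∏ i ∈ Finset.range k, (a + i)

/-- The product `⟨a, a+k⟩ = ∏_{i=0}^{⌊k/2⌋} (a+i)_{k+1-2i}` for `k ≥ 0`, and `1` for `k < 0`. -/
def angleQ (a : ℚ) (k : ℤ) : ℚ :=
  if k < 0 then 1
  else ∏ i ∈ Finset.range (k.toNat / 2 + 1), pochQ (a + i) (k.toNat + 1 - 2 * i)

/-- The monic polynomial `B̄_{m,n}(x)`. -/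
def polBbar (m n : ℕ) (x : ℚ) : ℚ :=
  ((2 : ℚ) ^ (m * n + n * (n + 1) / 2))⁻¹ *
    pochQ (x + m + 1) n *
    angleQ (x + 1) ((m : ℤ) - 1) * angleQ (x + 3 / 2) ((m : ℤ) - 2) *
    (∏ i ∈ Finset.Icc 1 m, pochQ (x + i) n / pochQ (x + i + 1 / 2) n) *
    ∏ i ∈ Finset.Icc 1 n, pochQ (2 * x + m + i + 1) (m + i)

/-- The constant `c̄_{𝐥,𝐪}` (here `𝐥` and `𝐪` are given as functions, the lists being
`l 1 < l 2 < ⋯ < l m` and `q 1 < q 2 < ⋯ < q n`). -/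
def constCbar (m n : ℕ) (l q : ℕ → ℕ) : ℚ :=
  (2 : ℚ) ^ ((((n : ℤ) - m) * ((n : ℤ) - m - 1)) / 2 - m) *
    (∏ i ∈ Finset.Icc 1 m, ((Nat.factorial (2 * l i - 1) : ℚ))⁻¹) *
    (∏ i ∈ Finset.Icc 1 n, ((Nat.factorial (2 * q i) : ℚ))⁻¹) *
    (∏ i ∈ Finset.Icc 1 m, ∏ j ∈ Finset.Icc (i + 1) m, ((l j : ℚ) - (l i : ℚ))) *
    (∏ i ∈ Finset.Icc 1 n, ∏ j ∈ Finset.Icc (i + 1) n, ((q j : ℚ) - (q i : ℚ))) /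
    (∏ i ∈ Finset.Icc 1 m, ∏ j ∈ Finset.Icc 1 n, ((l i : ℚ) + (q j : ℚ)))

/-- The polynomial `P̄_{𝐥,𝐪}(x)`; the parameter `lm` stands for `l_m` (which is `0` if `m = 0`). -/
def polPbar (m n : ℕ) (l q : ℕ → ℕ) (lm : ℕ) (x : ℚ) : ℚ :=
  constCbar m n l q * polBbar m n (x + lm - m) *
    (∏ i ∈ Finset.Icc 1 m, ∏ j ∈ Finset.Icc i (l i - 1),
      ((x + lm - j) * (x + lm - m + n + j + 1))) *
    ∏ i ∈ Finset.Icc 1 n, ∏ j ∈ Finset.Icc i (q i - 1),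
      ((x + lm - m + n - j) * (x + lm + j + 1))

open scoped Nat

/-!
Put `y = x + l_m - m`; strict monotonicity gives `i ≤ l_i` and `i ≤ q_i`, hence `y ≥ 0`. Up to
the constant `c̄`, `P̄(x)` is `B̄_{m,n}(y)` times double products
`∏_i ∏_{j=i}^{l_i-1} (a - j)(b + j)` with `a, b` affine in `x`. Shifting `x` by one telescopes
every inner product over `j` down to its two end factors, which produces the four products over
`i`, so everything reduces to the ratio `B̄(y+1)/B̄(y)`. That ratio is a quotient of factorials:
by induction on `n`, since `B̄_{m,n+1} = B̄_{m,n} · polBbarStep m n` with an explicit rational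
factor, and for `n = 0` by induction on `m` in steps of two, using
`⟨a, a+k+2⟩ = (a)_{k+3} ⟨a+1, a+k+1⟩`.
-/

lemma pochQ_zero (a : ℚ) : pochQ a 0 = 1 := by simp [pochQ]

lemma pochQ_succ_right (a : ℚ) (k : ℕ) : pochQ a (k + 1) = pochQ a k * (a + k) := by
  simp [pochQ, prod_range_succ]

lemma pochQ_succ_left (a : ℚ) (k : ℕ) : pochQ a (k + 1) = a * pochQ (a + 1) k := by
  simp only [pochQ, prod_range_succ', Nat.cast_add, Nat.cast_one, Nat.cast_zero, add_zero]
  rw [mul_comm]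
  congr 1
  exact prod_congr rfl fun i _ => by ring

lemma pochQ_add (a : ℚ) (j k : ℕ) : pochQ a (j + k) = pochQ a j * pochQ (a + j) k := by
  simp only [pochQ, prod_range_add, Nat.cast_add, add_assoc]

lemma pochQ_two (a : ℚ) : pochQ a 2 = a * (a + 1) := by
  simp [pochQ, prod_range_succ]

lemma pochQ_add_one_mul (a : ℚ) (k : ℕ) : pochQ (a + 1) k * a = pochQ a k * (a + k) := by
  rw [← pochQ_succ_right, pochQ_succ_left, mul_comm]

lemma pochQ_pos {a : ℚ} (ha : 0 < a) (k : ℕ) : 0 < pochQ a k :=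
  prod_pos fun i _ => by positivity

lemma prod_Icc_add_eq_pochQ (a : ℚ) (k : ℕ) : ∏ i ∈ Icc 1 k, (a + i) = pochQ (a + 1) k := by
  rw [← Ico_add_one_right_eq_Icc, prod_Ico_eq_prod_range, pochQ, Nat.add_sub_cancel]
  exact prod_congr rfl fun i _ => by push_cast; ring

lemma prod_Icc_sub_eq_pochQ (a : ℚ) (k : ℕ) : ∏ i ∈ Icc 1 k, (a - i) = pochQ (a - k) k := by
  induction k with
  | zero => simp [pochQ_zero]
  | succ k ih =>
    rw [prod_Icc_succ_top (by omega), ih, pochQ_succ_left, mul_comm]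
    push_cast
    ring_nf

lemma cast_factorial_add_eq_mul_pochQ (N k : ℕ) :
    ((N + k)! : ℚ) = N ! * pochQ (N + 1) k := by
  induction k with
  | zero => simp [pochQ_zero]
  | succ k ih => rw [← add_assoc, Nat.factorial_succ, pochQ_succ_right]; push_cast [ih]; ring

lemma angleQ_of_neg (a : ℚ) {k : ℤ} (hk : k < 0) : angleQ a k = 1 := if_pos hk

lemma angleQ_zero (a : ℚ) : angleQ a 0 = a := by
  simp [angleQ, pochQ]

lemma angleQ_add_two (a : ℚ) {k : ℤ} (hk : -2 ≤ k) :
    angleQ a (k + 2) = pochQ a (k + 3).toNat * angleQ (a + 1) k := by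
  rcases lt_or_ge k 0 with hneg | hnonneg
  · interval_cases k <;> simp [angleQ, pochQ]
  · lift k to ℕ using hnonneg with t
    rw [angleQ, angleQ, if_neg (by omega), if_neg (by omega),
      show ((t : ℤ) + 2).toNat = t + 2 by omega, show ((t : ℤ) + 3).toNat = t + 3 by omega,
      Int.toNat_natCast, show (t + 2) / 2 + 1 = t / 2 + 1 + 1 by omega, prod_range_succ',
      mul_comm]
    simp only [Nat.cast_add, Nat.cast_one, CharP.cast_eq_zero, add_zero, mul_zero,
      Nat.sub_zero, add_assoc]
    congr 1
    exact prod_congr rfl fun i _ => by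
      rw [show t + (2 + 1) - 2 * (i + 1) = t + 1 - 2 * i by omega, add_comm (i : ℚ) 1]

lemma polBbar_zero_right (m : ℕ) (x : ℚ) :
    polBbar m 0 x = angleQ (x + 1) ((m : ℤ) - 1) * angleQ (x + 3 / 2) ((m : ℤ) - 2) := by
  simp [polBbar, pochQ_zero]

lemma polBbar_add_two_zero (m : ℕ) (x : ℚ) :
    polBbar (m + 2) 0 x =
      pochQ (x + 1) (m + 2) * pochQ (x + 3 / 2) (m + 1) * polBbar m 0 (x + 1) := by
  rw [polBbar_zero_right, polBbar_zero_right,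
    show ((m + 2 : ℕ) : ℤ) - 1 = (m - 1 : ℤ) + 2 by push_cast; ring,
    show ((m + 2 : ℕ) : ℤ) - 2 = (m - 2 : ℤ) + 2 by push_cast; ring, angleQ_add_two _ (by omega),
    angleQ_add_two _ (by omega), show ((m : ℤ) - 1 + 3).toNat = m + 2 by omega,
    show ((m : ℤ) - 2 + 3).toNat = m + 1 by omega]
  ring_nf

lemma polBbar_zero_right_succ_mul (m : ℕ) (y : ℚ) :
    polBbar m 0 (y + 1) * pochQ (2 * y + 1) (m + 1) * pochQ (2 * y + 1) (m + 2) =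
      2 * (2 * y + 1) * (y + m + 1) * polBbar m 0 y * pochQ (2 * y + 1) (2 * m + 1) := by
  induction m using Nat.twoStepInduction generalizing y with
  | zero =>
    have hB (x : ℚ) : polBbar 0 0 x = 1 := by
      rw [polBbar_zero_right, angleQ_of_neg _ (by norm_num), angleQ_of_neg _ (by norm_num), mul_one]
    simp only [hB, pochQ, prod_range_succ, prod_range_zero]
    push_cast; ring
  | one =>
    have hB (x : ℚ) : polBbar 1 0 x = x + 1 := by
      rw [polBbar_zero_right, Nat.cast_one, sub_self, angleQ_zero, angleQ_of_neg _ (by norm_num),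
        mul_one]
    simp only [hB, pochQ, prod_range_succ, prod_range_zero]
    push_cast; ring
  | more m ih _ =>
    have ih := ih (y + 1)
    rw [polBbar_add_two_zero, polBbar_add_two_zero, show m + 2 + 1 = 2 + (m + 1) by ring,
      show m + 2 + 2 = 2 + (m + 2) by ring, show 2 * (m + 2) + 1 = 2 + (2 * m + 1 + 2) by ring,
      pochQ_add _ 2 (m + 1), pochQ_add _ 2 (m + 2), pochQ_add _ 2 (2 * m + 1 + 2),
      pochQ_add _ (2 * m + 1) 2, pochQ_succ_left (y + 1), pochQ_succ_right (y + 1 + 1),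
      pochQ_succ_left (y + 3 / 2), pochQ_succ_right (y + 1 + 3 / 2), pochQ_two, pochQ_two]
    push_cast at ih ⊢
    linear_combination (norm := ring_nf) pochQ (y + 2) (m + 1) * pochQ (y + 5 / 2) m *
      (y + m + 3) * (y + m + 5 / 2) * ((2 * y + 1) * (2 * y + 2)) ^ 2 * ih

def polBbarStep (m n : ℕ) (x : ℚ) : ℚ :=
  ((2 : ℚ) ^ (m + n + 1))⁻¹ * (x + m + n + 1) * (pochQ (x + n + 1) m / pochQ (x + n + 3 / 2) m) *
    pochQ (2 * x + m + n + 2) (m + n + 1)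

lemma polBbar_succ_right (m n : ℕ) (x : ℚ) :
    polBbar m (n + 1) x = polBbar m n x * polBbarStep m n x := by
  have hexp : m * (n + 1) + (n + 1) * (n + 1 + 1) / 2 = m * n + n * (n + 1) / 2 + (m + n + 1) := by
    rw [show (n + 1) * (n + 1 + 1) = n * (n + 1) + 2 * (n + 1) by ring,
      Nat.add_mul_div_left _ _ two_pos]
    ring
  have hquot : ∏ i ∈ Icc 1 m, pochQ (x + i) (n + 1) / pochQ (x + i + 1 / 2) (n + 1) =
      (∏ i ∈ Icc 1 m, pochQ (x + i) n / pochQ (x + i + 1 / 2) n) *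
        (pochQ (x + n + 1) m / pochQ (x + n + 3 / 2) m) := by
    rw [← prod_Icc_add_eq_pochQ, show x + n + 3 / 2 = x + n + 1 / 2 + 1 by ring,
      ← prod_Icc_add_eq_pochQ, ← prod_div_distrib, ← prod_mul_distrib]
    refine prod_congr rfl fun i _ => ?_
    rw [pochQ_succ_right, pochQ_succ_right, mul_div_mul_comm]
    ring_nf
  rw [polBbar, polBbar, hexp, hquot, pochQ_succ_right, prod_Icc_succ_top (by omega), polBbarStep]
  push_cast
  ring_nf

lemma polBbarStep_succ_mul (m n : ℕ) {y : ℚ} (hY : 0 ≤ y) :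
    polBbarStep m n (y + 1) * ((2 * y + m + n + 2) * (2 * y + m + n + 3) * (y + n + 1)) =
      2 * polBbarStep m n y * ((2 * y + 2 * n + 3) * (y + m + n + 2) ^ 2) := by
  have hnum : pochQ (y + 1 + n + 1) m = pochQ (y + n + 1) m * (y + n + 1 + m) / (y + n + 1) := by
    rw [eq_div_iff (by positivity), ← pochQ_add_one_mul, add_right_comm y]
  have hden : pochQ (y + 1 + n + 3 / 2) m =
      pochQ (y + n + 3 / 2) m * (y + n + 3 / 2 + m) / (y + n + 3 / 2) := by
    rw [eq_div_iff (by positivity), ← pochQ_add_one_mul]; ring_nf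
  have hdouble : pochQ (2 * (y + 1) + m + n + 2) (m + n + 1) =
      pochQ (2 * y + m + n + 2) (m + n + 1) *
          ((2 * y + 2 * m + 2 * n + 3) * (2 * y + 2 * m + 2 * n + 4)) /
        ((2 * y + m + n + 2) * (2 * y + m + n + 3)) := by
    have h₁ := pochQ_add (2 * y + m + n + 2) 2 (m + n + 1)
    have h₂ := pochQ_add (2 * y + m + n + 2) (m + n + 1) 2
    rw [pochQ_two] at h₁ h₂
    rw [eq_div_iff (by positivity)]
    push_cast at h₂
    linear_combination (norm := ring_nf) h₂ - h₁
  have hpos : 0 < pochQ (y + n + 3 / 2) m := pochQ_pos (by positivity) m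
  simp only [polBbarStep]
  rw [hnum, hden, hdouble]
  field_simp
  ring

lemma polBbar_succ_mul (m n : ℕ) {y : ℚ} (hY : 0 ≤ y) :
    polBbar m n (y + 1) * pochQ (2 * y + 1) (m + n + 1) * pochQ (2 * y + 1) (m + n + 2) *
        pochQ (y + 1) m * pochQ (y + 1) n =
      polBbar m n y * pochQ (2 * y + 1) (2 * m + 1) * pochQ (2 * y + 1) (2 * n + 2) *
        pochQ (y + n + 2) m * pochQ (y + m + 2) n := by
  induction n with
  | zero =>
    have h := polBbar_zero_right_succ_mul m y
    have hshift := pochQ_add_one_mul (y + 1) m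
    simp only [pochQ_zero, Nat.cast_zero, mul_zero, zero_add, add_zero, pochQ_two]
    linear_combination (norm := ring_nf) pochQ (y + 1) m * h -
      2 * (2 * y + 1) * polBbar m 0 y * pochQ (2 * y + 1) (2 * m + 1) * hshift
  | succ n ih =>
    have hstep := polBbarStep_succ_mul m n hY
    have hshift := pochQ_add_one_mul (y + n + 2) m
    rw [polBbar_succ_right, polBbar_succ_right, show m + (n + 1) + 1 = m + n + 1 + 1 by ring,
      show m + (n + 1) + 2 = m + n + 2 + 1 by ring, show 2 * (n + 1) + 2 = 2 * n + 2 + 2 by ring,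
      pochQ_succ_right _ (m + n + 1), pochQ_succ_right _ (m + n + 2), pochQ_succ_right (y + 1) n,
      pochQ_succ_right (y + m + 2) n, pochQ_add _ (2 * n + 2) 2, pochQ_two]
    refine mul_right_cancel₀ (b := y + n + 2) (by positivity) ?_
    push_cast
    linear_combination (norm := ring_nf)
      (y + n + 2) * polBbar m n (y + 1) * pochQ (2 * y + 1) (m + n + 1) *
        pochQ (2 * y + 1) (m + n + 2) * pochQ (y + 1) m * pochQ (y + 1) n * hstep +
      2 * (y + n + 2) * polBbarStep m n y * ((2 * y + 2 * n + 3) * (y + m + n + 2) ^ 2) * ih -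
      polBbar m n y * polBbarStep m n y * pochQ (2 * y + 1) (2 * m + 1) *
        pochQ (2 * y + 1) (2 * n + 2) * (2 * y + 2 * n + 3) * (2 * y + 2 * n + 4) *
        pochQ (y + m + 2) n * (y + m + n + 2) * hshift

lemma polBbar_succ_mul_factorial (m n y : ℕ) :
    polBbar m n (y + 1) * ((2 * y + m + n + 1)! : ℚ) * ((2 * y + m + n + 2)! : ℚ) *
        pochQ (y + 1) m * pochQ (y + 1) n =
      polBbar m n y * ((2 * y + 2 * m + 1)! : ℚ) * ((2 * y + 2 * n + 2)! : ℚ) *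
        pochQ (y + n + 2) m * pochQ (y + m + 2) n := by
  simp only [add_assoc, cast_factorial_add_eq_mul_pochQ, Nat.cast_mul, Nat.cast_ofNat]
  linear_combination (norm := ring_nf) ((2 * y)! : ℚ) ^ 2 * polBbar_succ_mul m n (Nat.cast_nonneg y)

lemma angleQ_pos {a : ℚ} (ha : 0 < a) (k : ℤ) : 0 < angleQ a k := by
  unfold angleQ
  split_ifs
  · exact one_pos
  · exact prod_pos fun i _ => pochQ_pos (by positivity) _

lemma polBbar_pos (m n : ℕ) {x : ℚ} (hx : 0 ≤ x) : 0 < polBbar m n x := by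
  have hquot : 0 < ∏ i ∈ Icc 1 m, pochQ (x + i) n / pochQ (x + i + 1 / 2) n :=
    prod_pos fun i hi => by
      have : (1 : ℚ) ≤ i := by exact_mod_cast (mem_Icc.1 hi).1
      exact div_pos (pochQ_pos (by linarith) n) (pochQ_pos (by linarith) n)
  unfold polBbar
  have := pochQ_pos (a := x + m + 1) (by positivity) n
  have := angleQ_pos (a := x + 1) (by positivity) (m - 1)
  have := angleQ_pos (a := x + 3 / 2) (by positivity) (m - 2)
  have : 0 < ∏ i ∈ Icc 1 n, pochQ (2 * x + m + i + 1) (m + i) :=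
    prod_pos fun i _ => pochQ_pos (by positivity) _
  positivity

lemma prod_Ico_sub_mul_add_shift (a b : ℚ) {s t : ℕ} (hst : s ≤ t) :
    (∏ j ∈ Ico s t, (a + 1 - j) * (b + 1 + j)) * ((a - t + 1) * (b + s)) =
      (∏ j ∈ Ico s t, (a - j) * (b + j)) * ((a - s + 1) * (b + t)) := by
  induction t, hst using Nat.le_induction with
  | base => simp
  | succ t hst ih =>
    rw [prod_Ico_succ_top hst, prod_Ico_succ_top hst]
    push_cast
    linear_combination (b + 1 + t) * (a - t) * ih

def pairProd (l : ℕ → ℕ) (m : ℕ) (a b : ℚ) : ℚ :=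
  ∏ i ∈ Icc 1 m, ∏ j ∈ Ico i (l i), (a - j) * (b + j)

lemma pairProd_succ {l : ℕ → ℕ} {m : ℕ} (hl : ∀ i ∈ Icc 1 m, i ≤ l i) (a b : ℚ) :
    pairProd l m (a + 1) (b + 1) * ((∏ i ∈ Icc 1 m, (a - l i + 1)) * pochQ (b + 1) m) =
      pairProd l m a b * (pochQ (a + 1 - m) m * ∏ i ∈ Icc 1 m, (b + l i)) := by
  rw [← prod_Icc_add_eq_pochQ, ← prod_Icc_sub_eq_pochQ, pairProd, pairProd, ← prod_mul_distrib,
    ← prod_mul_distrib, ← prod_mul_distrib, ← prod_mul_distrib]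
  refine prod_congr rfl fun i hi => ?_
  linear_combination prod_Ico_sub_mul_add_shift a b (hl i hi)

lemma polPbar_eq (m n : ℕ) (l q : ℕ → ℕ) (lm : ℕ) (x : ℚ) :
    polPbar m n l q lm x = constCbar m n l q * polBbar m n (x + lm - m) *
      pairProd l m (x + lm) (x + lm - m + n + 1) * pairProd q n (x + lm - m + n) (x + lm + 1) := by
  have hIcc {i : ℕ} (t : ℕ) (hi : i ∈ Icc 1 (max m n)) : Icc i (t - 1) = Ico i t := by
    ext j; simp only [mem_Icc, mem_Ico] at hi ⊢; omega
  unfold polPbar pairProd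
  congr 1
  · congr 1
    refine prod_congr rfl fun i hi => ?_
    rw [hIcc _ (Icc_subset_Icc_right (le_max_left m n) hi)]
    exact prod_congr rfl fun j _ => by ring
  · refine prod_congr rfl fun i hi => ?_
    rw [hIcc _ (Icc_subset_Icc_right (le_max_right m n) hi)]
    exact prod_congr rfl fun j _ => by ring

lemma polPbar_succ_mul {m n : ℕ} {l q : ℕ → ℕ} (hl : ∀ i ∈ Icc 1 m, i ≤ l i)
    (hq : ∀ i ∈ Icc 1 n, i ≤ q i) (lm : ℕ) {x y : ℚ} (hxy : x + lm = m + y) :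
    polPbar m n l q lm (x + 1) * polBbar m n y * (∏ i ∈ Icc 1 m, (x + lm - l i + 1)) *
        (∏ i ∈ Icc 1 n, (x + lm - q i - m + n + 1)) * pochQ (y + n + 2) m * pochQ (y + m + 2) n =
      polPbar m n l q lm x * polBbar m n (y + 1) * pochQ (y + 1) m * pochQ (y + 1) n *
        (∏ i ∈ Icc 1 m, (x + lm + l i - m + n + 1)) * ∏ i ∈ Icc 1 n, (x + lm + q i + 1) := by
  obtain rfl : y = x + lm - m := by linarith
  have hDl := pairProd_succ hl (x + lm) (x + lm - m + n + 1)
  have hDq := pairProd_succ hq (x + lm - m + n) (x + lm + 1)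
  rw [polPbar_eq, polPbar_eq]
  linear_combination (norm := ring_nf)
    constCbar m n l q * polBbar m n (x + lm - m + 1) * polBbar m n (x + lm - m) *
        pairProd q n (x + lm - m + n + 1) (x + lm + 1 + 1) *
        (∏ i ∈ Icc 1 n, (x + lm - q i - m + n + 1)) * pochQ (x + lm + 2) n * hDl +
      constCbar m n l q * polBbar m n (x + lm - m + 1) * polBbar m n (x + lm - m) *
        pairProd l m (x + lm) (x + lm - m + n + 1) * pochQ (x + lm - m + 1) m *
        (∏ i ∈ Icc 1 m, (x + lm + l i - m + n + 1)) * hDq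

lemma le_apply_of_increasing {f : ℕ → ℕ} {m : ℕ}
    (hf : ∀ i j, 1 ≤ i → i < j → j ≤ m → f i < f j) (hpos : ∀ i, 1 ≤ i → i ≤ m → 1 ≤ f i) :
    ∀ i ∈ Icc 1 m, i ≤ f i := by
  intro i hi
  obtain ⟨h1, him⟩ := mem_Icc.1 hi
  induction i, h1 using Nat.le_induction with
  | base => exact hpos 1 le_rfl him
  | succ i h1 ih =>
    have := ih (mem_Icc.2 ⟨h1, by omega⟩) (by omega)
    have := hf i (i + 1) h1 (by omega) him
    omega

theorem polPbar_ratio_general (m n : ℕ) (l q : ℕ → ℕ)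
    (hl : ∀ i j, 1 ≤ i → i < j → j ≤ m → l i < l j)
    (hq : ∀ i j, 1 ≤ i → i < j → j ≤ n → q i < q j)
    (hlpos : ∀ i, 1 ≤ i → i ≤ m → 1 ≤ l i)
    (hqpos : ∀ i, 1 ≤ i → i ≤ n → 1 ≤ q i)
    (x : ℕ) :
    polPbar m n l q (l m) ((x : ℚ) + 1) *
        (Nat.factorial (2 * x + 2 * l m + n + 1 - m) : ℚ) *
        (Nat.factorial (2 * x + 2 * l m + n + 2 - m) : ℚ) *
        (∏ i ∈ Finset.Icc 1 m, ((x : ℚ) + l m - l i + 1)) *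
        (∏ i ∈ Finset.Icc 1 n, ((x : ℚ) + l m - q i - m + n + 1)) =
      polPbar m n l q (l m) (x : ℚ) *
        (Nat.factorial (2 * x + 2 * l m + 1) : ℚ) *
        (Nat.factorial (2 * x + 2 * l m + 2 * n + 2 - 2 * m) : ℚ) *
        (∏ i ∈ Finset.Icc 1 m, ((x : ℚ) + l m + l i - m + n + 1)) *
        (∏ i ∈ Finset.Icc 1 n, ((x : ℚ) + l m + q i + 1)) := by
  have hli := le_apply_of_increasing hl hlpos
  have hqi := le_apply_of_increasing hq hqpos
  have hlm : m ≤ l m := by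
    rcases Nat.eq_zero_or_pos m with rfl | hm
    · exact Nat.zero_le _
    · exact hli m (mem_Icc.2 ⟨hm, le_rfl⟩)
  obtain ⟨y, hY⟩ := Nat.exists_eq_add_of_le (hlm.trans (Nat.le_add_left _ x))
  have hP := polPbar_succ_mul hli hqi (l m) (x := x) (y := y) (by exact_mod_cast hY)
  have hB := polBbar_succ_mul_factorial m n y
  rw [show 2 * x + 2 * l m + n + 1 - m = 2 * y + m + n + 1 by omega,
    show 2 * x + 2 * l m + n + 2 - m = 2 * y + m + n + 2 by omega,
    show 2 * x + 2 * l m + 1 = 2 * y + 2 * m + 1 by omega,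
    show 2 * x + 2 * l m + 2 * n + 2 - 2 * m = 2 * y + 2 * n + 2 by omega]
  have hW : polBbar m n y * pochQ (y + n + 2) m * pochQ (y + m + 2) n ≠ 0 := by
    have := polBbar_pos m n (Nat.cast_nonneg (α := ℚ) y)
    have := pochQ_pos (a := (y : ℚ) + n + 2) (by positivity) m
    have := pochQ_pos (a := (y : ℚ) + m + 2) (by positivity) n
    positivity
  refine mul_right_cancel₀ hW ?_
  linear_combination ((2 * y + m + n + 1)! : ℚ) * ((2 * y + m + n + 2)! : ℚ) * hP +
    polPbar m n l q (l m) x * (∏ i ∈ Icc 1 m, ((x : ℚ) + l m + l i - m + n + 1)) *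
      (∏ i ∈ Icc 1 n, ((x : ℚ) + l m + q i + 1)) * hB

/-- Lemma 4.6 (second part) of the paper, cross-multiplied: the ratio
`P̄_{𝐥,𝐪}(x+1)/P̄_{𝐥,𝐪}(x)` equals the explicit product of equation (4.14). -/
theorem polPbar_ratio (m n : ℕ) (l q : ℕ → ℕ)
    (hl : ∀ i j, 1 ≤ i → i < j → j ≤ m → l i < l j)
    (hq : ∀ i j, 1 ≤ i → i < j → j ≤ n → q i < q j)
    (hlpos : ∀ i, 1 ≤ i → i ≤ m → 1 ≤ l i)
    (hqpos : ∀ i, 1 ≤ i → i ≤ n → 1 ≤ q i)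
    (hl0 : m = 0 → l m = 0)
    (x : ℕ) :
    polPbar m n l q (l m) ((x : ℚ) + 1) *
        (Nat.factorial (2 * x + 2 * l m + n + 1 - m) : ℚ) *
        (Nat.factorial (2 * x + 2 * l m + n + 2 - m) : ℚ) *
        (∏ i ∈ Finset.Icc 1 m, ((x : ℚ) + l m - l i + 1)) *
        (∏ i ∈ Finset.Icc 1 n, ((x : ℚ) + l m - q i - m + n + 1)) =
      polPbar m n l q (l m) (x : ℚ) *
        (Nat.factorial (2 * x + 2 * l m + 1) : ℚ) *
        (Nat.factorial (2 * x + 2 * l m + 2 * n + 2 - 2 * m) : ℚ) *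
        (∏ i ∈ Finset.Icc 1 m, ((x : ℚ) + l m + l i - m + n + 1)) *
        (∏ i ∈ Finset.Icc 1 n, ((x : ℚ) + l m + q i + 1)) :=
  polPbar_ratio_general m n l q hl hq hlpos hqpos x
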